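/- Let R be a field with a distinguished invertible element q^{1/2} (write q = (q^{1/2})^2), and let Q be an antisymmetric r×r integer matrix. Then the set of nonzero elements of the quantum torus T(Q) satisfies both the left and the right Ore conditions; consequently T(Q) has a ring of fractions which is a division ring. -/

import Mathlib

/-!
The normalized monomials `x^k`, `k ∈ ℤ^r`, form an `R`-basis of `T(Q)` in which `x^k x^l` is a
unit multiple of `x^{k+l}`. They span because the generators commute with each other up to
units, so any word can be reordered into a monomial; they are linearly independent because
`T(Q)` acts on `R[ℤ^r]` by twisted translations `e_m ↦ q^{⟨k,m⟩/2} e_{k+m}`, under which `x^k`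
acts as a unit multiple of the translation by `k`.

In such a twisted group algebra over `ℤ^r` the coefficient of `x^{a+b}` in a product is, for a
uniquely decomposable `a + b`, a unit times the product of coefficients, so `T(Q)` is a domain.
For the Ore condition count dimensions: the span of the monomials in the cube `[-n, n]^r` has
dimension `(2n+1)^r`, and if `a` and `s` are supported in the cube of size `d`, multiplication by
either maps it into the span of the cube of size `n + d`. Since `2 (2n+1)^r > (2n+2d+1)^r` for
large `n`, the equation `u a = v s` has a solution with `u ≠ 0`. A domain satisfying both Ore conditions embeds in its division ring of fractions.
-/

open scoped BigOperators Matrix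

/-- Defining relations of the quantum torus `T(Q)` over a commutative ring `R`
with distinguished invertible element `sqq = q^{1/2}` (so `q = sqq^2`):
generators `x_i = ι (Sum.inl i)` and their inverses `x_i⁻¹ = ι (Sum.inr i)`,
relations `x_i x_i⁻¹ = x_i⁻¹ x_i = 1` and `x_i x_j = q^{Q i j} x_j x_i`. -/
inductive QTRel (R : Type) [CommRing R] (sqq : Rˣ) {r : ℕ} (Q : Matrix (Fin r) (Fin r) ℤ) :
    FreeAlgebra R (Fin r ⊕ Fin r) → FreeAlgebra R (Fin r ⊕ Fin r) → Prop
  | mul_inv (i : Fin r) :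
      QTRel R sqq Q (FreeAlgebra.ι R (Sum.inl i) * FreeAlgebra.ι R (Sum.inr i)) 1
  | inv_mul (i : Fin r) :
      QTRel R sqq Q (FreeAlgebra.ι R (Sum.inr i) * FreeAlgebra.ι R (Sum.inl i)) 1
  | qcomm (i j : Fin r) :
      QTRel R sqq Q (FreeAlgebra.ι R (Sum.inl i) * FreeAlgebra.ι R (Sum.inl j))
        (((sqq ^ (2 * Q i j) : Rˣ) : R) •
          (FreeAlgebra.ι R (Sum.inl j) * FreeAlgebra.ι R (Sum.inl i)))

/-- The quantum torus `T(Q)`. -/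
def QuantumTorus (R : Type) [CommRing R] (sqq : Rˣ) {r : ℕ}
    (Q : Matrix (Fin r) (Fin r) ℤ) : Type :=
  RingQuot (QTRel R sqq Q)

noncomputable instance (R : Type) [CommRing R] (sqq : Rˣ) {r : ℕ}
    (Q : Matrix (Fin r) (Fin r) ℤ) : Ring (QuantumTorus R sqq Q) :=
  inferInstanceAs (Ring (RingQuot (QTRel R sqq Q)))

noncomputable instance (R : Type) [CommRing R] (sqq : Rˣ) {r : ℕ}
    (Q : Matrix (Fin r) (Fin r) ℤ) : Algebra R (QuantumTorus R sqq Q) :=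
  inferInstanceAs (Algebra R (RingQuot (QTRel R sqq Q)))

namespace QuantumTorus

variable {R : Type} [CommRing R] (sqq : Rˣ) {r : ℕ} (Q : Matrix (Fin r) (Fin r) ℤ)

/-- The generator `x_i` of the quantum torus. -/
noncomputable def X (i : Fin r) : QuantumTorus R sqq Q :=
  RingQuot.mkAlgHom R (QTRel R sqq Q) (FreeAlgebra.ι R (Sum.inl i))

/-- The inverse generator `x_i⁻¹` of the quantum torus. -/
noncomputable def Xinv (i : Fin r) : QuantumTorus R sqq Q :=
  RingQuot.mkAlgHom R (QTRel R sqq Q) (FreeAlgebra.ι R (Sum.inr i))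

/-- `x_i^k` for `k : ℤ`, using the inverse generator for negative powers. -/
noncomputable def genPow (i : Fin r) (k : ℤ) : QuantumTorus R sqq Q :=
  if 0 ≤ k then X sqq Q i ^ k.toNat else Xinv sqq Q i ^ (-k).toNat

end QuantumTorus

/-- The pairing `⟨k,k'⟩_Q = ∑_{i,j} Q i j * k i * k' j`. -/
def quantumPairing {r : ℕ} (Q : Matrix (Fin r) (Fin r) ℤ) (k k' : Fin r → ℤ) : ℤ :=
  ∑ i, ∑ j, Q i j * k i * k' j

/-- The sum `∑_{i<j} Q i j * k i * k j` used to normalize monomials. -/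
def quantumUpperSum {r : ℕ} (Q : Matrix (Fin r) (Fin r) ℤ) (k : Fin r → ℤ) : ℤ :=
  ∑ i, ∑ j, if i < j then Q i j * k i * k j else 0

/-- The normalized monomial
`x^k = q^{-(1/2) ∑_{i<j} Q i j k_i k_j} x_1^{k_1} ⋯ x_r^{k_r}`. -/
noncomputable def QuantumTorus.monomial {R : Type} [CommRing R] (sqq : Rˣ) {r : ℕ}
    (Q : Matrix (Fin r) (Fin r) ℤ) (k : Fin r → ℤ) : QuantumTorus R sqq Q :=
  ((sqq ^ (-(quantumUpperSum Q k)) : Rˣ) : R) •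
    ((List.finRange r).map (fun i => QuantumTorus.genPow sqq Q i (k i))).prod

open scoped Pointwise

section CommuteUpToUnit

variable (R : Type*) {A : Type*} [CommRing R] [Ring A] [Algebra R A]

def CommuteUpToUnit (x y : A) : Prop := ∃ c : Rˣ, x * y = c • (y * x)

variable {R} {x y z : A}

namespace CommuteUpToUnit

theorem symm (h : CommuteUpToUnit R x y) : CommuteUpToUnit R y x := by
  obtain ⟨c, hc⟩ := h
  exact ⟨c⁻¹, by rw [hc, inv_smul_smul]⟩

theorem one_right (x : A) : CommuteUpToUnit R x 1 := ⟨1, by simp⟩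

theorem mul_right (hy : CommuteUpToUnit R x y) (hz : CommuteUpToUnit R x z) :
    CommuteUpToUnit R x (y * z) := by
  obtain ⟨c, hc⟩ := hy
  obtain ⟨d, hd⟩ := hz
  refine ⟨c * d, ?_⟩
  rw [← mul_assoc, hc, smul_mul_assoc, mul_assoc, hd, mul_smul_comm, smul_smul, mul_assoc]

theorem pow_right (h : CommuteUpToUnit R x y) (n : ℕ) : CommuteUpToUnit R x (y ^ n) := by
  induction n with
  | zero => simpa using one_right x
  | succ n ih => simpa [pow_succ] using ih.mul_right h

theorem units_inv_right {u : Aˣ} (h : CommuteUpToUnit R x (u : A)) :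
    CommuteUpToUnit R x ↑u⁻¹ := by
  obtain ⟨c, hc⟩ := h
  refine ⟨c⁻¹, ?_⟩
  calc x * ↑u⁻¹ = ↑u⁻¹ * (u * x * ↑u⁻¹) := by simp [← mul_assoc]
    _ = ↑u⁻¹ * ((c⁻¹ • (x * u)) * ↑u⁻¹) := by rw [hc, inv_smul_smul]
    _ = c⁻¹ • (↑u⁻¹ * x) := by simp [smul_mul_assoc, mul_smul_comm, mul_assoc]

theorem units_zpow_right {u : Aˣ} (h : CommuteUpToUnit R x (u : A)) (a : ℤ) :
    CommuteUpToUnit R x ↑(u ^ a) := by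
  obtain ⟨n, rfl | rfl⟩ := a.eq_nat_or_neg
  · simpa using h.pow_right n
  · simpa using h.units_inv_right.pow_right n

theorem units_zpow_left {u : Aˣ} (h : CommuteUpToUnit R (u : A) y) (a : ℤ) :
    CommuteUpToUnit R ↑(u ^ a) y :=
  (h.symm.units_zpow_right a).symm

end CommuteUpToUnit

theorem List.Perm.exists_prod_eq_smul_prod {L L' : List A} (hL : L.Perm L')
    (h : ∀ x ∈ L, ∀ y ∈ L, CommuteUpToUnit R x y) : ∃ c : Rˣ, L.prod = c • L'.prod := by
  induction hL with
  | nil => exact ⟨1, by simp⟩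
  | cons x _ ih =>
    obtain ⟨c, hc⟩ := ih fun y hy z hz => h y (.tail _ hy) z (.tail _ hz)
    exact ⟨c, by rw [List.prod_cons, List.prod_cons, hc, mul_smul_comm]⟩
  | swap x y l =>
    obtain ⟨c, hc⟩ := h y (by simp) x (by simp)
    exact ⟨c, by simp only [List.prod_cons, ← mul_assoc, hc, smul_mul_assoc]⟩
  | trans h₁₂ _ ih₁₂ ih₂₃ =>
    obtain ⟨c, hc⟩ := ih₁₂ h
    obtain ⟨d, hd⟩ := ih₂₃ fun x hx y hy => h x (h₁₂.mem_iff.mpr hx) y (h₁₂.mem_iff.mpr hy)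
    exact ⟨c * d, by rw [hc, hd, smul_smul]⟩

end CommuteUpToUnit

namespace Module.Basis

section TwistedGroupBasis

variable {R A G : Type*} [CommRing R] [Ring A] [Algebra R A] [Add G] {b : Basis G R A}
  {c : G → G → Rˣ}

theorem repr_mul_of_mul_eq_smul (hc : ∀ k l, b k * b l = c k l • b (k + l)) (x y : A) :
    b.repr (x * y) = (b.repr x).sum fun k p => (b.repr y).sum fun l p' =>
      Finsupp.single (k + l) (p * p' * c k l) := by
  conv_lhs => rw [← b.linearCombination_repr x, ← b.linearCombination_repr y]
  simp only [Finsupp.linearCombination_apply, Finsupp.sum_mul, Finsupp.mul_sum, smul_mul_smul,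
    hc, map_finsuppSum, map_smul, Units.smul_def, smul_smul, repr_self, Finsupp.smul_single,
    smul_eq_mul, mul_one]
  exact Finsupp.sum_comm _ _ _

theorem support_repr_mul_subset [DecidableEq G] (hc : ∀ k l, b k * b l = c k l • b (k + l))
    (x y : A) : (b.repr (x * y)).support ⊆ (b.repr x).support + (b.repr y).support := by
  rw [repr_mul_of_mul_eq_smul hc]
  refine Finsupp.support_sum.trans (Finset.biUnion_subset.mpr fun k hk => ?_)
  refine Finsupp.support_sum.trans (Finset.biUnion_subset.mpr fun l hl => ?_)
  exact Finsupp.support_single_subset.trans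
    (Finset.singleton_subset_iff.mpr (Finset.add_mem_add hk hl))

theorem repr_mul_apply_of_uniqueAdd (hc : ∀ k l, b k * b l = c k l • b (k + l)) {x y : A}
    {k l : G} (h : UniqueAdd (b.repr x).support (b.repr y).support k l) :
    b.repr (x * y) (k + l) = b.repr x k * b.repr y l * c k l := by
  classical
  simp only [repr_mul_of_mul_eq_smul hc, Finsupp.sum, Finsupp.finsetSum_apply,
    Finsupp.single_apply, ← Finset.sum_product']
  rw [Finset.sum_eq_single (k, l), if_pos rfl]
  · rintro ⟨k', l'⟩ hkl hne
    rw [Finset.mem_product] at hkl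
    exact if_neg fun he => hne (Prod.ext_iff.mpr (h hkl.1 hkl.2 he))
  · intro hkl
    rw [Finset.mem_product, Finsupp.mem_support_iff, Finsupp.mem_support_iff] at hkl
    rcases not_and_or.mp hkl with hk | hl
    · rw [not_not.mp hk, zero_mul, zero_mul, ite_self]
    · rw [not_not.mp hl, mul_zero, zero_mul, ite_self]

theorem noZeroDivisors_of_mul_eq_smul [IsDomain R] [UniqueSums G]
    (hc : ∀ k l, b k * b l = c k l • b (k + l)) : NoZeroDivisors A := by
  refine ⟨fun {x y} hxy => ?_⟩
  by_contra! hne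
  obtain ⟨k, hk, l, hl, h⟩ := UniqueSums.uniqueAdd_of_nonempty
    (Finsupp.support_nonempty_iff.mpr (b.repr.map_ne_zero_iff.mpr hne.1))
    (Finsupp.support_nonempty_iff.mpr (b.repr.map_ne_zero_iff.mpr hne.2))
  have hcoeff := repr_mul_apply_of_uniqueAdd hc h
  rw [hxy, map_zero, Finsupp.zero_apply] at hcoeff
  exact mul_ne_zero (mul_ne_zero (Finsupp.mem_support_iff.mp hk) (Finsupp.mem_support_iff.mp hl))
    (c k l).ne_zero hcoeff.symm

end TwistedGroupBasis

end Module.Basis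

open Filter Topology in
theorem exists_pow_lt_two_mul_pow (m d : ℕ) :
    ∃ n : ℕ, (2 * (n + d) + 1) ^ m < 2 * (2 * n + 1) ^ m := by
  have hden : Tendsto (fun n : ℕ => (2 * n + 1 : ℝ)) atTop atTop :=
    tendsto_atTop_add_const_right _ _ (tendsto_natCast_atTop_atTop.const_mul_atTop two_pos)
  have hratio : Tendsto (fun n : ℕ => (1 + 2 * d / (2 * n + 1) : ℝ) ^ m) atTop (𝓝 1) := by
    simpa using ((tendsto_const_nhds.div_atTop hden).const_add 1).pow m
  obtain ⟨n, hn⟩ := (hratio.eventually (gt_mem_nhds one_lt_two)).exists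
  rw [one_add_div (by positivity), div_pow, div_lt_iff₀ (by positivity),
    show (2 * n + 1 + 2 * d : ℝ) = 2 * (n + d) + 1 by ring] at hn
  exact ⟨n, by exact_mod_cast hn⟩

noncomputable def intCube (ι : Type*) [Fintype ι] [DecidableEq ι] (n : ℕ) : Finset (ι → ℤ) :=
  Finset.Icc (-(n : ι → ℤ)) n

section IntCube

variable {ι : Type*} [Fintype ι] [DecidableEq ι]

theorem mem_intCube {n : ℕ} {k : ι → ℤ} : k ∈ intCube ι n ↔ ∀ i, |k i| ≤ n := by
  simp [intCube, Pi.le_def, abs_le, forall_and]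

theorem card_intCube (n : ℕ) : (intCube ι n).card = (2 * n + 1) ^ Fintype.card ι := by
  simp only [intCube, Pi.card_Icc, Pi.neg_apply, Pi.natCast_apply, Int.card_Icc,
    Finset.prod_const, Finset.card_univ]
  congr 1
  omega

theorem intCube_add_intCube_subset (m n : ℕ) :
    intCube ι m + intCube ι n ⊆ intCube ι (m + n) := by
  intro k hk
  obtain ⟨k₁, hk₁, k₂, hk₂, rfl⟩ := Finset.mem_add.mp hk
  rw [mem_intCube] at hk₁ hk₂ ⊢
  intro i
  exact (abs_add_le _ _).trans (by push_cast; exact add_le_add (hk₁ i) (hk₂ i))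

theorem exists_subset_intCube (s : Finset (ι → ℤ)) : ∃ n : ℕ, s ⊆ intCube ι n := by
  refine ⟨s.sup fun k => Finset.univ.sup fun i => (k i).natAbs, fun k hk => ?_⟩
  rw [mem_intCube]
  intro i
  have hi := (Finset.le_sup (f := fun i => (k i).natAbs) (Finset.mem_univ i)).trans
    (Finset.le_sup (f := fun k => Finset.univ.sup fun i => (k i).natAbs) hk)
  rw [Int.abs_eq_natAbs]
  exact_mod_cast hi

end IntCube

namespace Module.Basis

section Ore

variable {K A ι : Type*} [Field K] [Fintype ι] [DecidableEq ι]

theorem finrank_span_image_intCube [AddCommGroup A] [Module K A] (b : Basis (ι → ℤ) K A)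
    (n : ℕ) :
    Module.finrank K (Submodule.span K (b '' intCube ι n)) = (2 * n + 1) ^ Fintype.card ι := by
  rw [Set.image_eq_range]
  exact (finrank_span_eq_card (b.linearIndependent.comp _ Subtype.val_injective)).trans
    ((Fintype.card_coe _).trans (card_intCube n))

theorem exists_mem_span_image_intCube [AddCommGroup A] [Module K A] (b : Basis (ι → ℤ) K A)
    (x y : A) : ∃ d : ℕ, x ∈ Submodule.span K (b '' intCube ι d) ∧
      y ∈ Submodule.span K (b '' intCube ι d) := by
  obtain ⟨d, hd⟩ := exists_subset_intCube ((b.repr x).support ∪ (b.repr y).support)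
  simp only [mem_span_image, Finset.coe_subset]
  exact ⟨d, Finset.union_subset_left hd, Finset.union_subset_right hd⟩

theorem exists_ne_zero_map_eq_map [AddCommGroup A] [Module K A] (b : Basis (ι → ℤ) K A)
    {f g : A →ₗ[K] A} (hg : Function.Injective g) (d : ℕ)
    (hf : ∀ n, ∀ x ∈ Submodule.span K (b '' intCube ι n),
      f x ∈ Submodule.span K (b '' intCube ι (n + d)))
    (hg' : ∀ n, ∀ x ∈ Submodule.span K (b '' intCube ι n),
      g x ∈ Submodule.span K (b '' intCube ι (n + d))) :
    ∃ u ≠ 0, ∃ v, f u = g v := by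
  obtain ⟨n, hn⟩ := exists_pow_lt_two_mul_pow (Fintype.card ι) d
  set W := Submodule.span K (b '' intCube ι n)
  set W' := Submodule.span K (b '' intCube ι (n + d))
  have : FiniteDimensional K W := .span_of_finite K ((intCube ι n).finite_toSet.image b)
  have : FiniteDimensional K W' := .span_of_finite K ((intCube ι (n + d)).finite_toSet.image b)
  let Φ : W × W →ₗ[K] W' :=
    ((f ∘ₗ W.subtype).codRestrict W' fun x => hf n x x.2).coprod
      (-(g ∘ₗ W.subtype).codRestrict W' fun x => hg' n x x.2)
  have hdim : Module.finrank K W' < Module.finrank K (W × W) := by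
    rw [Module.finrank_prod, finrank_span_image_intCube, finrank_span_image_intCube]
    omega
  obtain ⟨⟨u, v⟩, huv, hne⟩ := Submodule.exists_mem_ne_zero_of_ne_bot
    (LinearMap.ker_ne_bot_of_finrank_lt (f := Φ) hdim)
  have hfg : f u = g v := by
    have h0 := congrArg Subtype.val (LinearMap.mem_ker.mp huv)
    simp only [Φ, LinearMap.coprod_apply, LinearMap.neg_apply, Submodule.coe_add,
      Submodule.coe_neg, ZeroMemClass.coe_zero] at h0
    exact add_neg_eq_zero.mp h0
  refine ⟨u, fun hu => hne ?_, v, hfg⟩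
  have hv : (v : A) = 0 := hg (by rw [← hfg, hu, map_zero, map_zero])
  exact Prod.ext (Subtype.ext hu) (Subtype.ext hv)

variable [Ring A] [Algebra K A] {b : Basis (ι → ℤ) K A} {c : (ι → ℤ) → (ι → ℤ) → Kˣ}

theorem mul_mem_span_image_intCube (hc : ∀ k l, b k * b l = c k l • b (k + l)) {x y : A}
    {m n : ℕ} (hx : x ∈ Submodule.span K (b '' intCube ι m))
    (hy : y ∈ Submodule.span K (b '' intCube ι n)) :
    x * y ∈ Submodule.span K (b '' intCube ι (m + n)) := by
  rw [mem_span_image, Finset.coe_subset] at hx hy ⊢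
  exact (support_repr_mul_subset hc x y).trans
    ((Finset.add_subset_add hx hy).trans (intCube_add_intCube_subset m n))

theorem exists_ne_zero_mul_eq_mul_left [NoZeroDivisors A]
    (hc : ∀ k l, b k * b l = c k l • b (k + l)) (a : A) {s : A} (hs : s ≠ 0) :
    ∃ a' s' : A, s' ≠ 0 ∧ s' * a = a' * s := by
  obtain ⟨d, ha, hs'⟩ := b.exists_mem_span_image_intCube a s
  obtain ⟨u, hu, v, huv⟩ := b.exists_ne_zero_map_eq_map (f := LinearMap.mulRight K a)
    (g := LinearMap.mulRight K s) (mul_left_injective₀ hs) d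
    (fun _ _ hx => mul_mem_span_image_intCube hc hx ha)
    (fun _ _ hx => mul_mem_span_image_intCube hc hx hs')
  exact ⟨v, u, hu, huv⟩

theorem exists_ne_zero_mul_eq_mul_right [NoZeroDivisors A]
    (hc : ∀ k l, b k * b l = c k l • b (k + l)) (a : A) {s : A} (hs : s ≠ 0) :
    ∃ a' s' : A, s' ≠ 0 ∧ a * s' = s * a' := by
  obtain ⟨d, ha, hs'⟩ := b.exists_mem_span_image_intCube a s
  obtain ⟨u, hu, v, huv⟩ := b.exists_ne_zero_map_eq_map (f := LinearMap.mulLeft K a)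
    (g := LinearMap.mulLeft K s) (mul_right_injective₀ hs) d
    (fun n _ hx => add_comm d n ▸ mul_mem_span_image_intCube hc ha hx)
    (fun n _ hx => add_comm d n ▸ mul_mem_span_image_intCube hc hs' hx)
  exact ⟨v, u, hu, huv⟩

end Ore

end Module.Basis

section TwistedTranslation

variable {R G : Type*} [CommRing R] [AddCommMonoid G] (β : G →+ G →+ ℤ) (u : Rˣ)

noncomputable def twistedTranslation (k : G) : Module.End R (G →₀ R) :=
  Finsupp.lsum R fun m => ((u ^ β k m : Rˣ) : R) • Finsupp.lsingle (k + m)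

theorem twistedTranslation_single (k m : G) (a : R) :
    twistedTranslation β u k (Finsupp.single m a) = (u ^ β k m) • Finsupp.single (k + m) a := by
  simp [twistedTranslation, Units.smul_def]

theorem twistedTranslation_zero : twistedTranslation β u 0 = (1 : Module.End R (G →₀ R)) :=
  Finsupp.lhom_ext fun m a => by simp [twistedTranslation_single]

theorem twistedTranslation_mul (v w : G) :
    twistedTranslation β u v * twistedTranslation β u w =
      (u ^ β v w) • twistedTranslation β u (v + w) := by
  refine Finsupp.lhom_ext fun m a => ?_
  simp only [Module.End.mul_apply, LinearMap.smul_apply, twistedTranslation_single,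
    LinearMap.map_smul_of_tower, smul_smul, ← zpow_add, map_add, AddMonoidHom.add_apply,
    add_assoc]
  ring_nf

theorem twistedTranslation_mul_comm (v w : G) :
    twistedTranslation β u v * twistedTranslation β u w =
      (u ^ (β v w - β w v)) • (twistedTranslation β u w * twistedTranslation β u v) := by
  rw [twistedTranslation_mul, twistedTranslation_mul, smul_smul, ← zpow_add, add_comm w v]
  ring_nf

theorem twistedTranslation_pow {v : G} (hv : β v v = 0) (n : ℕ) :
    twistedTranslation β u v ^ n = twistedTranslation β u (n • v) := by
  induction n with
  | zero => simp [twistedTranslation_zero]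
  | succ n ih => simp [pow_succ, ih, twistedTranslation_mul, succ_nsmul, hv]

theorem twistedTranslation_apply_single_zero (k : G) :
    twistedTranslation β u k (Finsupp.single 0 1) = Finsupp.single k 1 := by
  simp [twistedTranslation_single]

theorem exists_list_prod_twistedTranslation (L : List G) :
    ∃ c : Rˣ, (L.map (twistedTranslation β u)).prod = c • twistedTranslation β u L.sum := by
  induction L with
  | nil => exact ⟨1, by simp [twistedTranslation_zero]⟩
  | cons v L ih =>
    obtain ⟨c, hc⟩ := ih
    refine ⟨c * u ^ β v L.sum, ?_⟩
    rw [List.map_cons, List.prod_cons, hc, mul_smul_comm, twistedTranslation_mul, smul_smul,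
      List.sum_cons]

end TwistedTranslation

def quantumPairingHom {r : ℕ} (Q : Matrix (Fin r) (Fin r) ℤ) : (Fin r → ℤ) →+ (Fin r → ℤ) →+ ℤ :=
  AddMonoidHom.mk' (fun k => AddMonoidHom.mk' (quantumPairing Q k) fun l l' => by
    simp only [quantumPairing, Pi.add_apply, mul_add, Finset.sum_add_distrib]) fun k k' =>
    AddMonoidHom.ext fun l => by
      show quantumPairing Q (k + k') l = quantumPairing Q k l + quantumPairing Q k' l
      simp only [quantumPairing, Pi.add_apply, mul_add, add_mul, Finset.sum_add_distrib]

theorem quantumPairingHom_apply {r : ℕ} (Q : Matrix (Fin r) (Fin r) ℤ) (k l : Fin r → ℤ) :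
    quantumPairingHom Q k l = quantumPairing Q k l := rfl

theorem quantumPairingHom_single_single {r : ℕ} (Q : Matrix (Fin r) (Fin r) ℤ) (i j : Fin r)
    (a b : ℤ) : quantumPairingHom Q (Pi.single i a) (Pi.single j b) = a * b * Q i j := by
  rw [quantumPairingHom_apply]
  simp [quantumPairing, Pi.single_apply]
  ring

namespace QuantumTorus

section Monomials

variable {R : Type} [CommRing R] (sqq : Rˣ) {r : ℕ} (Q : Matrix (Fin r) (Fin r) ℤ)

theorem X_mul_Xinv (i : Fin r) : X sqq Q i * Xinv sqq Q i = 1 := by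
  have h := RingQuot.mkAlgHom_rel R (QTRel.mul_inv (R := R) (sqq := sqq) (Q := Q) i)
  rwa [map_mul, map_one] at h

theorem Xinv_mul_X (i : Fin r) : Xinv sqq Q i * X sqq Q i = 1 := by
  have h := RingQuot.mkAlgHom_rel R (QTRel.inv_mul (R := R) (sqq := sqq) (Q := Q) i)
  rwa [map_mul, map_one] at h

theorem X_mul_X (i j : Fin r) :
    X sqq Q i * X sqq Q j = (sqq ^ (2 * Q i j)) • (X sqq Q j * X sqq Q i) := by
  have h := RingQuot.mkAlgHom_rel R (QTRel.qcomm (R := R) (sqq := sqq) (Q := Q) i j)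
  rwa [map_mul, map_smul, map_mul, ← Units.smul_def] at h

noncomputable def xUnit (i : Fin r) : (QuantumTorus R sqq Q)ˣ :=
  ⟨X sqq Q i, Xinv sqq Q i, X_mul_Xinv sqq Q i, Xinv_mul_X sqq Q i⟩

theorem genPow_eq_zpow (i : Fin r) (a : ℤ) : genPow sqq Q i a = ↑(xUnit sqq Q i ^ a) := by
  obtain ⟨n, rfl | rfl⟩ := a.eq_nat_or_neg
  · simp [genPow, xUnit]
  · rcases n with _ | n
    · simp [genPow]
    · rw [genPow, if_neg (by omega), neg_neg, Int.toNat_natCast, zpow_neg, zpow_natCast,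
        ← inv_pow, Units.val_pow_eq_pow_val]
      rfl

theorem genPow_mul_genPow (i : Fin r) (a b : ℤ) :
    genPow sqq Q i a * genPow sqq Q i b = genPow sqq Q i (a + b) := by
  simp only [genPow_eq_zpow, ← Units.val_mul, zpow_add]

theorem commuteUpToUnit_genPow (i j : Fin r) (a b : ℤ) :
    CommuteUpToUnit R (genPow sqq Q i a) (genPow sqq Q j b) := by
  rw [genPow_eq_zpow, genPow_eq_zpow]
  exact (CommuteUpToUnit.units_zpow_left ⟨_, X_mul_X sqq Q i j⟩ a).units_zpow_right b

theorem monomial_zero : monomial sqq Q (0 : Fin r → ℤ) = 1 := by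
  simp [monomial, quantumUpperSum, genPow]

theorem exists_monomial_eq_smul_genPow_mul (i : Fin r) (k : Fin r → ℤ) :
    ∃ c : Rˣ, monomial sqq Q k = c • (genPow sqq Q i (k i) *
      (((List.finRange r).erase i).map fun j => genPow sqq Q j (k j)).prod) := by
  obtain ⟨c, hc⟩ := ((List.perm_cons_erase (List.mem_finRange i)).map
    fun j => genPow sqq Q j (k j)).exists_prod_eq_smul_prod (R := R) fun x hx y hy => by
      obtain ⟨j, -, rfl⟩ := List.mem_map.mp hx
      obtain ⟨l, -, rfl⟩ := List.mem_map.mp hy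
      exact commuteUpToUnit_genPow sqq Q j l _ _
  refine ⟨sqq ^ (-quantumUpperSum Q k) * c, ?_⟩
  rw [monomial, hc, ← Units.smul_def, smul_smul, List.map_cons, List.prod_cons]

theorem exists_genPow_mul_monomial_eq_smul (i : Fin r) (a : ℤ) (k : Fin r → ℤ) :
    ∃ c : Rˣ, genPow sqq Q i a * monomial sqq Q k = c • monomial sqq Q (k + Pi.single i a) := by
  obtain ⟨c, hc⟩ := exists_monomial_eq_smul_genPow_mul sqq Q i k
  obtain ⟨c', hc'⟩ := exists_monomial_eq_smul_genPow_mul sqq Q i (k + Pi.single i a)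
  have hrest : (((List.finRange r).erase i).map
      fun j => genPow sqq Q j ((k + (Pi.single i a : Fin r → ℤ)) j))
      = ((List.finRange r).erase i).map fun j => genPow sqq Q j (k j) :=
    List.map_congr_left fun j hj => by
      rw [Pi.add_apply, Pi.single_eq_of_ne (ne_of_mem_of_not_mem hj
        (List.nodup_finRange r).not_mem_erase), add_zero]
  refine ⟨c * c'⁻¹, ?_⟩
  rw [hc', hrest, Pi.add_apply, Pi.single_eq_same, add_comm (k i), ← genPow_mul_genPow,
    smul_smul, inv_mul_cancel_right, hc, mul_smul_comm, mul_assoc]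

theorem span_range_monomial : Submodule.span R (Set.range (monomial sqq Q)) = ⊤ := by
  set M := Submodule.span R (Set.range (monomial sqq Q))
  have genPow_mul_mem : ∀ i a, ∀ m ∈ M, genPow sqq Q i a * m ∈ M := by
    intro i a m hm
    induction hm using Submodule.span_induction with
    | mem m hm =>
      obtain ⟨k, rfl⟩ := hm
      obtain ⟨c, hc⟩ := exists_genPow_mul_monomial_eq_smul sqq Q i a k
      exact hc ▸ M.smul_of_tower_mem c (Submodule.subset_span ⟨_, rfl⟩)
    | zero => simp
    | add x y _ _ hx hy => simpa [mul_add] using M.add_mem hx hy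
    | smul c x _ hx => simpa using M.smul_mem c hx
  let π : FreeAlgebra R (Fin r ⊕ Fin r) →ₐ[R] QuantumTorus R sqq Q :=
    RingQuot.mkAlgHom R (QTRel R sqq Q)
  have mul_mem : ∀ x, ∀ m ∈ M, x * m ∈ M := by
    intro x
    obtain ⟨x, rfl⟩ : ∃ y, π y = x := RingQuot.mkAlgHom_surjective R (QTRel R sqq Q) x
    induction x using FreeAlgebra.induction with
    | grade0 c =>
      intro m hm
      rw [AlgHom.commutes, ← Algebra.smul_def]
      exact M.smul_mem c hm
    | grade1 s =>
      rcases s with i | i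
      · show ∀ m ∈ M, X sqq Q i * m ∈ M
        simpa [genPow] using genPow_mul_mem i 1
      · show ∀ m ∈ M, Xinv sqq Q i * m ∈ M
        simpa [genPow] using genPow_mul_mem i (-1)
    | mul x y hx hy =>
      intro m hm
      rw [map_mul, mul_assoc]
      exact hx _ (hy m hm)
    | add x y hx hy =>
      intro m hm
      rw [map_add, add_mul]
      exact M.add_mem (hx m hm) (hy m hm)
  refine eq_top_iff.mpr fun x _ => ?_
  simpa using mul_mem x _ (Submodule.subset_span ⟨0, monomial_zero sqq Q⟩)

theorem exists_monomial_mul_monomial_eq_smul (k l : Fin r → ℤ) :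
    ∃ c : Rˣ, monomial sqq Q k * monomial sqq Q l = c • monomial sqq Q (k + l) := by
  have key : ∀ (L : List (Fin r)) (l : Fin r → ℤ), ∃ c : Rˣ,
      (L.map fun i => genPow sqq Q i (k i)).prod * monomial sqq Q l =
        c • monomial sqq Q ((L.map fun i => Pi.single i (k i)).sum + l) := by
    intro L
    induction L with
    | nil => exact fun l => ⟨1, by simp⟩
    | cons i L ih =>
      intro l
      obtain ⟨c, hc⟩ := ih l
      obtain ⟨c', hc'⟩ := exists_genPow_mul_monomial_eq_smul sqq Q i (k i)
        ((L.map fun i => Pi.single i (k i)).sum + l)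
      refine ⟨c * c', ?_⟩
      rw [List.map_cons, List.prod_cons, mul_assoc, hc, mul_smul_comm, hc', smul_smul,
        List.map_cons, List.sum_cons]
      congr 2
      abel
  obtain ⟨c, hc⟩ := key (List.finRange r) l
  refine ⟨sqq ^ (-quantumUpperSum Q k) * c, ?_⟩
  rw [monomial, smul_mul_assoc, hc, ← Fin.sum_univ_def, Finset.univ_sum_single, ← Units.smul_def,
    smul_smul]

end Monomials

section Representation

variable {R : Type} [CommRing R] (sqq : Rˣ) {r : ℕ} {Q : Matrix (Fin r) (Fin r) ℤ}

local notation "T" => twistedTranslation (quantumPairingHom Q) sqq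

local notation "Tgen" => Sum.elim (fun i => T (Pi.single i 1)) fun i => T (Pi.single i (-1))

theorem twistedTranslation_respects_rel (hQ : Qᵀ = -Q) ⦃x y : FreeAlgebra R (Fin r ⊕ Fin r)⦄
    (h : QTRel R sqq Q x y) :
    FreeAlgebra.lift R Tgen x = FreeAlgebra.lift R Tgen y := by
  have antisymm : ∀ i j, Q j i = -Q i j := fun i j => congrFun (congrFun hQ i) j
  have diag : ∀ i, Q i i = 0 := fun i => by linarith [antisymm i i]
  induction h with
  | mul_inv i =>
    simp [twistedTranslation_mul, Pi.single_neg, quantumPairingHom_single_single, diag,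
      twistedTranslation_zero]
  | inv_mul i =>
    simp [twistedTranslation_mul, Pi.single_neg, quantumPairingHom_single_single, diag,
      twistedTranslation_zero]
  | qcomm i j =>
    simp only [map_mul, map_smul, FreeAlgebra.lift_ι_apply, Sum.elim_inl]
    rw [twistedTranslation_mul_comm, ← Units.smul_def]
    simp only [quantumPairingHom_single_single, antisymm i j, one_mul]
    ring_nf

noncomputable def toEnd (hQ : Qᵀ = -Q) :
    QuantumTorus R sqq Q →ₐ[R] Module.End R ((Fin r → ℤ) →₀ R) :=
  RingQuot.liftAlgHom R ⟨_, twistedTranslation_respects_rel sqq hQ⟩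

theorem toEnd_X (hQ : Qᵀ = -Q) (i : Fin r) : toEnd sqq hQ (X sqq Q i) = T (Pi.single i 1) :=
  (RingQuot.liftAlgHom_mkAlgHom_apply R _ _ _).trans (FreeAlgebra.lift_ι_apply _ _)

theorem toEnd_Xinv (hQ : Qᵀ = -Q) (i : Fin r) :
    toEnd sqq hQ (Xinv sqq Q i) = T (Pi.single i (-1)) :=
  (RingQuot.liftAlgHom_mkAlgHom_apply R _ _ _).trans (FreeAlgebra.lift_ι_apply _ _)

theorem toEnd_genPow (hQ : Qᵀ = -Q) (i : Fin r) (a : ℤ) :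
    toEnd sqq hQ (genPow sqq Q i a) = T (Pi.single i a) := by
  have antisymm : Q i i = -Q i i := congrFun (congrFun hQ i) i
  have diag : Q i i = 0 := by linarith
  have hpow : ∀ (b : ℤ) (n : ℕ), T (Pi.single i b) ^ n = T (Pi.single i (n * b)) := fun b n => by
    rw [twistedTranslation_pow _ _ (by simp [quantumPairingHom_single_single, diag]),
      ← Pi.single_smul', nsmul_eq_mul]
  rw [genPow]
  split_ifs with ha
  · rw [map_pow, toEnd_X, hpow, mul_one, Int.toNat_of_nonneg ha]
  · rw [map_pow, toEnd_Xinv, hpow, Int.toNat_of_nonneg (by omega)]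
    ring_nf

theorem exists_toEnd_monomial (hQ : Qᵀ = -Q) (k : Fin r → ℤ) :
    ∃ c : Rˣ, toEnd sqq hQ (monomial sqq Q k) = c • T k := by
  obtain ⟨c, hc⟩ := exists_list_prod_twistedTranslation (quantumPairingHom Q) sqq
    ((List.finRange r).map fun i => Pi.single i (k i))
  refine ⟨sqq ^ (-quantumUpperSum Q k) * c, ?_⟩
  simp only [List.map_map, Function.comp_def] at hc
  rw [monomial, map_smul, map_list_prod, List.map_map]
  simp only [Function.comp_def, toEnd_genPow]
  rw [hc, ← Fin.sum_univ_def, Finset.univ_sum_single, ← Units.smul_def, smul_smul]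

theorem linearIndependent_monomial (hQ : Qᵀ = -Q) : LinearIndependent R (monomial sqq Q) := by
  choose c hc using exists_toEnd_monomial sqq hQ
  refine LinearIndependent.of_comp
    (LinearMap.applyₗ (Finsupp.single 0 1) ∘ₗ (toEnd sqq hQ).toLinearMap) ?_
  convert (Finsupp.linearIndependent_single_one R (Fin r → ℤ)).units_smul c using 1
  ext k : 1
  simp [hc, twistedTranslation_apply_single_zero]

noncomputable def monomialBasis (hQ : Qᵀ = -Q) :
    Module.Basis (Fin r → ℤ) R (QuantumTorus R sqq Q) :=
  .mk (linearIndependent_monomial sqq hQ) (span_range_monomial sqq Q).ge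

theorem monomialBasis_apply (hQ : Qᵀ = -Q) (k : Fin r → ℤ) :
    monomialBasis sqq hQ k = monomial sqq Q k :=
  Module.Basis.mk_apply _ _ k

end Representation

end QuantumTorus

/-- Mathlib's Ore localization consists of left fractions `s⁻¹ a`; the right Ore condition turns
them into right fractions `a' s'⁻¹`. -/
theorem exists_divisionRing_of_ore {A : Type} [Ring A] [Nontrivial A] [NoZeroDivisors A]
    (hl : ∀ a s : A, s ≠ 0 → ∃ a' s' : A, s' ≠ 0 ∧ s' * a = a' * s)
    (hr : ∀ a s : A, s ≠ 0 → ∃ a' s' : A, s' ≠ 0 ∧ a * s' = s * a') :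
    ∃ (D : Type) (_ : DivisionRing D) (f : A →+* D), Function.Injective f ∧
      ∀ d : D, ∃ a s : A, s ≠ 0 ∧ d = f a * (f s)⁻¹ := by
  choose num den hden hore using fun (a : A) (s : nonZeroDivisors A) =>
    hl a s (nonZeroDivisors.ne_zero s.2)
  let _ : OreLocalization.OreSet (nonZeroDivisors A) := OreLocalization.oreSetOfNoZeroDivisors num
    (fun a s => ⟨den a s, mem_nonZeroDivisors_of_ne_zero (hden a s)⟩) hore
  let f : A →+* OreLocalization (nonZeroDivisors A) A := OreLocalization.numeratorRingHom
  have hf : Function.Injective f := OreLocalization.numeratorHom_inj fun _ h => h.1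
  refine ⟨_, inferInstance, f, hf, fun d => ?_⟩
  induction d with | _ a s
  obtain ⟨a', s', hs', h⟩ := hr a s (nonZeroDivisors.ne_zero s.2)
  have hfs : f s * (a /ₒ s) = f a := by
    show (s : A) /ₒ (1 : nonZeroDivisors A) * (a /ₒ s) = a /ₒ 1
    exact OreLocalization.mul_cancel
  refine ⟨a', s', hs', ?_⟩
  rw [eq_mul_inv_iff_mul_eq₀ ((map_ne_zero_iff f hf).mpr hs')]
  apply mul_left_cancel₀ ((map_ne_zero_iff f hf).mpr (nonZeroDivisors.ne_zero s.2))
  rw [← mul_assoc, hfs, ← map_mul, ← map_mul, h]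

/-- Over a field `R`, the nonzero elements of the quantum torus `T(Q)`
satisfy the left and right Ore conditions; consequently `T(Q)` has a ring of
fractions which is a division ring. -/
theorem quantumTorus_ore (R : Type) [Field R] (sqq : Rˣ)
    {r : ℕ} (Q : Matrix (Fin r) (Fin r) ℤ) (hQ : Qᵀ = -Q) :
    (∀ a s : QuantumTorus R sqq Q, s ≠ 0 → ∃ a' s' : QuantumTorus R sqq Q,
        s' ≠ 0 ∧ s' * a = a' * s) ∧
    (∀ a s : QuantumTorus R sqq Q, s ≠ 0 → ∃ a' s' : QuantumTorus R sqq Q,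
        s' ≠ 0 ∧ a * s' = s * a') ∧
    ∃ (D : Type) (_ : DivisionRing D) (f : QuantumTorus R sqq Q →+* D),
      Function.Injective f ∧
        ∀ d : D, ∃ a s : QuantumTorus R sqq Q, s ≠ 0 ∧ d = f a * (f s)⁻¹ := by
  let b := QuantumTorus.monomialBasis sqq hQ
  choose c hc using QuantumTorus.exists_monomial_mul_monomial_eq_smul (R := R) sqq Q
  have hb : ∀ k l, b k * b l = c k l • b (k + l) := by
    simpa only [b, QuantumTorus.monomialBasis_apply] using hc
  have : NoZeroDivisors (QuantumTorus R sqq Q) := b.noZeroDivisors_of_mul_eq_smul hb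
  have : Nontrivial (QuantumTorus R sqq Q) := nontrivial_of_ne _ 0 (b.ne_zero 0)
  have hl := fun a s (hs : s ≠ 0) => b.exists_ne_zero_mul_eq_mul_left hb a hs
  have hr := fun a s (hs : s ≠ 0) => b.exists_ne_zero_mul_eq_mul_right hb a hs
  exact ⟨hl, hr, exists_divisionRing_of_ore hl hr⟩
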